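/- For an entire function ψ and α > 0, the integral ∫_ℂ e^{(pα/2)(|ψ(z)|² - |z|²)} dm(z) is finite if and only if ψ(z) = az + b for some a, b ∈ ℂ with |a| < 1. -/

import Mathlib

/-!
Write `c = pα/2`. If `‖a‖ < 1`, the integrand for `ψ z = a * z + b` is dominated by a Gaussian.
Conversely, `exp (c ‖ψ‖²)` has the sub-mean-value property on discs: it dominates the modulus of
the entire function `w ↦ exp (c (2 ψ(w) conj ψ(z) - ‖ψ z‖²))`, with equality at `z`. Comparing it
on the unit disc about `z` with the integrable `exp (c (‖ψ w‖² - ‖w‖²))` gives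
`‖ψ z‖ ≤ ‖z‖ + C`, so by Cauchy's estimates `‖ψ'‖ ≤ 1`, and by Liouville `ψ` is affine with
`‖a‖ ≤ 1`. Finally `‖a‖ = 1` is impossible: then the parallelogram law makes the exponents at
`z` and `-z` add up to a constant, so the integrand plus its reflection is bounded below by a
positive constant.
-/

open MeasureTheory Complex Filter Topology ENNReal NNReal Metric Set Real ComplexConjugate

theorem Real.circleAverage_eq_integral_Ioo {E : Type*} [NormedAddCommGroup E] [NormedSpace ℝ E]
    (f : ℂ → E) (c : ℂ) (r : ℝ) :
    circleAverage f c r = (2 * π)⁻¹ • ∫ θ in Ioo (-π) π, f (circleMap c r θ) := by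
  rw [circleAverage_eq_integral_add (-π),
    intervalIntegral.integral_comp_add_right (fun θ => f (circleMap c r θ)),
    intervalIntegral.integral_of_le (by linarith [Real.pi_pos]), integral_Ioc_eq_integral_Ioo]
  ring_nf

theorem Complex.add_polarCoord_symm_eq_circleMap (p : ℝ × ℝ) (c : ℂ) :
    c + Complex.polarCoord.symm p = circleMap c p.1 p.2 := by
  rw [Complex.polarCoord_symm_apply, circleMap, Complex.exp_mul_I, ← ofReal_cos, ← ofReal_sin]

theorem setIntegral_ball_eq_intervalIntegral_circleAverage {E : Type*} [NormedAddCommGroup E]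
    [NormedSpace ℝ E] {f : ℂ → E} (hf : Continuous f) (c : ℂ) {R : ℝ} (hR : 0 ≤ R) :
    ∫ w in ball c R, f w = ∫ r in 0..R, (2 * π * r) • circleAverage f c r := by
  set g : ℝ × ℝ → E := fun p => p.1 • f (circleMap c p.1 p.2)
  have hball : ∫ w in ball c R, f w = ∫ w, (ball 0 R).indicator (fun w => f (c + w)) w := by
    classical
    rw [← integral_indicator measurableSet_ball, ← integral_add_left_eq_self _ c]
    simp only [indicator_apply, mem_ball, dist_self_add_left, dist_zero_right]
  have hpolar : EqOn (fun p : ℝ × ℝ => p.1 • (ball 0 R).indicator (fun w => f (c + w))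
      (Complex.polarCoord.symm p)) ((Ioo 0 R ×ˢ univ).indicator g) (Ioi 0 ×ˢ Ioo (-π) π) := by
    rintro ⟨r, θ⟩ ⟨hr, -⟩
    have hr : 0 < r := hr
    have hmem : Complex.polarCoord.symm (r, θ) ∈ ball 0 R ↔ r < R := by
      rw [mem_ball_zero_iff, Complex.norm_polarCoord_symm, abs_of_pos hr]
    beta_reduce
    by_cases hrR : r < R
    · rw [indicator_of_mem (hmem.2 hrR), indicator_of_mem (by simp [hr, hrR]),
        Complex.add_polarCoord_symm_eq_circleMap]
    · rw [indicator_of_notMem (mt hmem.1 hrR), indicator_of_notMem (by simp [hrR]), smul_zero]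
  have hint : IntegrableOn g (Ioo 0 R ×ˢ Ioo (-π) π) :=
    ((by fun_prop : Continuous g).continuousOn.integrableOn_compact
      (isCompact_Icc.prod isCompact_Icc)).mono_set
      (Set.prod_mono Ioo_subset_Icc_self Ioo_subset_Icc_self)
  rw [hball, ← Complex.integral_comp_polarCoord_symm, polarCoord_target,
    setIntegral_congr_fun (measurableSet_Ioi.prod measurableSet_Ioo) hpolar,
    setIntegral_indicator (measurableSet_Ioo.prod MeasurableSet.univ), prod_inter_prod,
    Ioi_inter_Ioo, inter_univ, max_self, Measure.volume_eq_prod, setIntegral_prod _ hint,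
    intervalIntegral.integral_of_le hR, integral_Ioc_eq_integral_Ioo]
  refine setIntegral_congr_fun measurableSet_Ioo fun r _ => ?_
  simp only [g, integral_smul, circleAverage_eq_integral_Ioo, smul_smul]
  congr 1
  field_simp

theorem Differentiable.setIntegral_ball_eq_smul {E : Type*} [NormedAddCommGroup E]
    [NormedSpace ℂ E] [CompleteSpace E] {F : ℂ → E} (hF : Differentiable ℂ F) (c : ℂ) {R : ℝ}
    (hR : 0 ≤ R) : ∫ w in ball c R, F w = (π * R ^ 2) • F c := by
  have hmean (r : ℝ) : circleAverage F c r = F c := hF.diffContOnCl.circleAverage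
  rw [setIntegral_ball_eq_intervalIntegral_circleAverage hF.continuous c hR]
  simp_rw [hmean]
  rw [intervalIntegral.integral_smul_const,
    intervalIntegral.integral_const_mul, integral_id]
  congr 1
  ring

theorem Continuous.integrableOn_ball {E : Type*} [NormedAddCommGroup E] {f : ℂ → E}
    (hf : Continuous f) (c : ℂ) (R : ℝ) : IntegrableOn f (ball c R) :=
  (hf.locallyIntegrable.integrableOn_isCompact (isCompact_closedBall c R)).mono_set
    ball_subset_closedBall

theorem norm_cexp_mul_two_mul_conj_sub (c : ℝ) (a b : ℂ) :
    ‖cexp (c * (2 * a * conj b - ‖b‖ ^ 2))‖ = rexp (c * (‖a‖ ^ 2 - ‖a - b‖ ^ 2)) := by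
  rw [Complex.norm_exp]
  congr 1
  rw [← Complex.normSq_eq_norm_sq, ← Complex.normSq_eq_norm_sq, Complex.normSq_sub,
    Complex.re_ofReal_mul]
  congr 1
  simp [Complex.mul_re, ← Complex.ofReal_pow, Complex.normSq_eq_norm_sq]
  ring

theorem pi_mul_sq_mul_exp_le_setIntegral_ball {ψ : ℂ → ℂ} (hψ : Differentiable ℂ ψ) {c : ℝ}
    (hc : 0 ≤ c) (z : ℂ) {R : ℝ} (hR : 0 ≤ R) :
    π * R ^ 2 * rexp (c * ‖ψ z‖ ^ 2) ≤ ∫ w in ball z R, rexp (c * ‖ψ w‖ ^ 2) := by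
  set G : ℂ → ℂ := fun w => cexp (c * (2 * ψ w * conj (ψ z) - ‖ψ z‖ ^ 2))
  have hG : Differentiable ℂ G := by fun_prop
  have hψc := hψ.continuous
  have hGz : ‖G z‖ = rexp (c * ‖ψ z‖ ^ 2) := by
    simp [G, norm_cexp_mul_two_mul_conj_sub]
  have hGle : ∀ w, ‖G w‖ ≤ rexp (c * ‖ψ w‖ ^ 2) := fun w => by
    rw [norm_cexp_mul_two_mul_conj_sub]
    gcongr
    nlinarith [sq_nonneg ‖ψ w - ψ z‖]
  calc π * R ^ 2 * rexp (c * ‖ψ z‖ ^ 2) = ‖∫ w in ball z R, G w‖ := by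
        rw [hG.setIntegral_ball_eq_smul z hR, norm_smul, hGz, Real.norm_of_nonneg (by positivity)]
    _ ≤ ∫ w in ball z R, rexp (c * ‖ψ w‖ ^ 2) :=
        norm_integral_le_of_norm_le ((by fun_prop : Continuous _).integrableOn_ball z R)
          (ae_of_all _ hGle)

theorem exp_sub_sq_le_of_lintegral_lt_top {ψ : ℂ → ℂ} (hψ : Differentiable ℂ ψ) {c : ℝ}
    (hc : 0 ≤ c) (hfin : ∫⁻ z, ENNReal.ofReal (rexp (c * (‖ψ z‖ ^ 2 - ‖z‖ ^ 2))) < ⊤) (z : ℂ) :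
    rexp (c * (‖ψ z‖ ^ 2 - (‖z‖ + 1) ^ 2)) ≤
      (∫⁻ z, ENNReal.ofReal (rexp (c * (‖ψ z‖ ^ 2 - ‖z‖ ^ 2)))).toReal / π := by
  set v : ℂ → ℝ := fun w => rexp (c * (‖ψ w‖ ^ 2 - ‖w‖ ^ 2))
  have hψc := hψ.continuous
  have hv : Continuous v := by fun_prop
  have hball : ∀ w ∈ ball z 1, rexp (c * ‖ψ w‖ ^ 2) ≤ rexp (c * (‖z‖ + 1) ^ 2) * v w := by
    intro w hw
    have hw : ‖w‖ ≤ ‖z‖ + 1 := by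
      have := norm_le_norm_add_norm_sub' w z
      linarith [mem_ball_iff_norm.1 hw]
    have hw2 : ‖w‖ ^ 2 ≤ (‖z‖ + 1) ^ 2 := by gcongr
    rw [← Real.exp_add]
    gcongr
    nlinarith [mul_le_mul_of_nonneg_left hw2 hc]
  have hv_le : ∫ w in ball z 1, v w ≤ (∫⁻ z, ENNReal.ofReal (v z)).toReal := by
    rw [integral_eq_lintegral_of_nonneg_ae (ae_of_all _ fun w => (Real.exp_pos _).le)
      hv.aestronglyMeasurable]
    exact ENNReal.toReal_mono hfin.ne (setLIntegral_le_lintegral _ _)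
  have hmean := pi_mul_sq_mul_exp_le_setIntegral_ball hψ hc z zero_le_one
  rw [one_pow, mul_one] at hmean
  have hbound : π * rexp (c * ‖ψ z‖ ^ 2) ≤
      rexp (c * (‖z‖ + 1) ^ 2) * (∫⁻ z, ENNReal.ofReal (v z)).toReal :=
    calc π * rexp (c * ‖ψ z‖ ^ 2) ≤ ∫ w in ball z 1, rexp (c * ‖ψ w‖ ^ 2) := hmean
      _ ≤ ∫ w in ball z 1, rexp (c * (‖z‖ + 1) ^ 2) * v w :=
          setIntegral_mono_on ((by fun_prop : Continuous _).integrableOn_ball z 1)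
            ((hv.integrableOn_ball z 1).const_mul _) measurableSet_ball hball
      _ ≤ _ := by
          rw [integral_const_mul]
          exact mul_le_mul_of_nonneg_left hv_le (exp_pos _).le
  rw [le_div_iff₀ Real.pi_pos, mul_sub, Real.exp_sub, div_mul_eq_mul_div, div_le_iff₀ (exp_pos _)]
  linarith

theorem exists_norm_le_norm_add_const_of_lintegral_lt_top {ψ : ℂ → ℂ} (hψ : Differentiable ℂ ψ)
    {c : ℝ} (hc : 0 < c)
    (hfin : ∫⁻ z, ENNReal.ofReal (rexp (c * (‖ψ z‖ ^ 2 - ‖z‖ ^ 2))) < ⊤) :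
    ∃ C, ∀ z, ‖ψ z‖ ≤ ‖z‖ + C := by
  set I := (∫⁻ z, ENNReal.ofReal (rexp (c * (‖ψ z‖ ^ 2 - ‖z‖ ^ 2)))).toReal / π
  have hbound := exp_sub_sq_le_of_lintegral_lt_top hψ hc.le hfin
  have hI : 0 < I := (exp_pos _).trans_le (hbound 0)
  set M := max (Real.log I / c) 0
  refine ⟨1 + √M, fun z => ?_⟩
  have hsq : ‖ψ z‖ ^ 2 ≤ (‖z‖ + 1) ^ 2 + M := by
    have hlog := (Real.le_log_iff_exp_le hI).2 (hbound z)
    have : ‖ψ z‖ ^ 2 - (‖z‖ + 1) ^ 2 ≤ Real.log I / c := by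
      rw [le_div_iff₀ hc]
      linarith
    linarith [le_max_left (Real.log I / c) 0]
  apply le_of_pow_le_pow_left₀ two_ne_zero (by positivity)
  nlinarith [Real.sq_sqrt (le_max_right (Real.log I / c) 0), Real.sqrt_nonneg M, norm_nonneg z]

theorem norm_deriv_le_of_norm_le_mul_norm_add_const {F : Type*} [NormedAddCommGroup F]
    [NormedSpace ℂ F] {f : ℂ → F} (hf : Differentiable ℂ f) {K C : ℝ} (hK : 0 ≤ K)
    (hfC : ∀ z, ‖f z‖ ≤ K * ‖z‖ + C) (z : ℂ) : ‖deriv f z‖ ≤ K := by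
  have hcauchy : ∀ R > 0, ‖deriv f z‖ ≤ (K * (‖z‖ + R) + C) / R := fun R hR =>
    norm_deriv_le_of_forall_mem_sphere_norm_le hR hf.diffContOnCl fun w hw => by
      have hw' : ‖w‖ ≤ ‖z‖ + R := by
        have := norm_le_norm_add_norm_sub' w z
        linarith [mem_sphere_iff_norm.1 hw]
      linarith [hfC w, mul_le_mul_of_nonneg_left hw' hK]
  have hlim : Tendsto (fun R => (K * (‖z‖ + R) + C) / R) atTop (𝓝 K) := by
    have : Tendsto (fun R => (K * ‖z‖ + C) / R + K) atTop (𝓝 (0 + K)) :=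
      (tendsto_const_nhds.div_atTop tendsto_id).add tendsto_const_nhds
    rw [zero_add] at this
    refine this.congr' ((eventually_gt_atTop 0).mono fun R hR => ?_)
    field_simp
    ring
  exact ge_of_tendsto hlim ((eventually_gt_atTop 0).mono hcauchy)

theorem exists_eq_mul_add_of_norm_deriv_le {f : ℂ → ℂ} (hf : Differentiable ℂ f)
    {K : ℝ} (hK : ∀ z, ‖deriv f z‖ ≤ K) : ∃ a b, ‖a‖ ≤ K ∧ ∀ z, f z = a * z + b := by
  obtain ⟨a, ha⟩ := hf.deriv.exists_const_forall_eq_of_bounded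
    (isBounded_iff_forall_norm_le.2 ⟨K, by rintro _ ⟨z, rfl⟩; exact hK z⟩)
  have hg : Differentiable ℂ (fun z => f z - a * z) := by fun_prop
  have hg' : ∀ z, deriv (fun z => f z - a * z) z = 0 := fun z => by
    rw [deriv_fun_sub (hf z) (by fun_prop), ha]
    simp
  refine ⟨a, f 0, ha 0 ▸ hK 0, fun z => ?_⟩
  have := is_const_of_deriv_eq_zero hg hg' z 0
  linear_combination this

theorem lintegral_ofReal_exp_eq_top_of_add_comp_neg {G : Type*} [MeasurableSpace G]
    [InvolutiveNeg G] [MeasurableNeg G] {μ : Measure G} [μ.IsNegInvariant] (hμ : μ univ = ⊤)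
    {g : G → ℝ} (hg : Measurable g) {K : ℝ} (hK : ∀ x, g x + g (-x) = K) :
    ∫⁻ x, ENNReal.ofReal (rexp (g x)) ∂μ = ⊤ := by
  have hpair : ∀ x, ENNReal.ofReal (rexp (K / 2)) ≤
      ENNReal.ofReal (rexp (g x)) + ENNReal.ofReal (rexp (g (-x))) := fun x => by
    rw [← ENNReal.ofReal_add (exp_pos _).le (exp_pos _).le]
    refine ENNReal.ofReal_le_ofReal ?_
    rcases le_total (g (-x)) (g x) with h | h
    · have : rexp (K / 2) ≤ rexp (g x) := by gcongr; linarith [hK x]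
      linarith [exp_pos (g (-x))]
    · have : rexp (K / 2) ≤ rexp (g (-x)) := by gcongr; linarith [hK x]
      linarith [exp_pos (g x)]
  have hsum : ∫⁻ x, ENNReal.ofReal (rexp (g x)) + ENNReal.ofReal (rexp (g (-x))) ∂μ = ⊤ :=
    eq_top_mono (lintegral_mono hpair) (by simp [hμ, exp_pos])
  rwa [lintegral_add_left (by fun_prop),
    lintegral_neg_eq_self (fun x => ENNReal.ofReal (rexp (g x))), ENNReal.add_eq_top, or_self]
    at hsum

theorem lintegral_exp_sq_norm_mul_add_sub_eq_top {a : ℂ} (ha : ‖a‖ = 1) (b : ℂ) (c : ℝ) :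
    ∫⁻ z, ENNReal.ofReal (rexp (c * (‖a * z + b‖ ^ 2 - ‖z‖ ^ 2))) = ⊤ := by
  refine lintegral_ofReal_exp_eq_top_of_add_comp_neg (measure_univ_of_isAddLeftInvariant _)
    (by fun_prop) (K := 2 * c * ‖b‖ ^ 2) fun z => ?_
  have := parallelogram_law_with_norm ℝ b (a * z)
  rw [norm_mul, ha, one_mul] at this
  rw [norm_neg, mul_neg, add_comm (a * z), ← sub_eq_neg_add]
  linear_combination c * this

theorem lintegral_exp_sq_norm_mul_add_sub_lt_top {a : ℂ} (ha : ‖a‖ < 1) (b : ℂ) {c : ℝ}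
    (hc : 0 < c) : ∫⁻ z, ENNReal.ofReal (rexp (c * (‖a * z + b‖ ^ 2 - ‖z‖ ^ 2))) < ⊤ := by
  set δ := 1 - ‖a‖ ^ 2
  have hδ : 0 < δ := by nlinarith [norm_nonneg a]
  set K := (1 + 2 / δ) * ‖b‖ ^ 2
  have hquad : ∀ z, ‖a * z + b‖ ^ 2 - ‖z‖ ^ 2 ≤ -(δ / 2) * ‖z‖ ^ 2 + K := fun z => by
    have htri : ‖a * z + b‖ ≤ ‖a‖ * ‖z‖ + ‖b‖ := (norm_add_le _ _).trans_eq (by rw [norm_mul])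
    have hyoung : 2 * ‖z‖ * ‖b‖ ≤ δ / 2 * ‖z‖ ^ 2 + 2 / δ * ‖b‖ ^ 2 := by
      have := sq_nonneg (δ * ‖z‖ - 2 * ‖b‖)
      field_simp
      nlinarith
    have hsq : ‖a * z + b‖ ^ 2 ≤ (‖a‖ * ‖z‖ + ‖b‖) ^ 2 := by gcongr
    have hcross : ‖a‖ * (‖z‖ * ‖b‖) ≤ ‖z‖ * ‖b‖ := mul_le_of_le_one_left (by positivity) ha.le
    have hδz : δ * ‖z‖ ^ 2 = ‖z‖ ^ 2 - ‖a‖ ^ 2 * ‖z‖ ^ 2 := by ring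
    nlinarith
  have hgauss : Integrable (fun z : ℂ => rexp (c * K) * rexp (-(c * δ / 2) * ‖z‖ ^ 2)) := by
    refine Integrable.const_mul (Integrable.of_integral_ne_zero ?_) _
    rw [GaussianFourier.integral_rexp_neg_mul_sq_norm (by positivity)]
    positivity
  refine lt_of_le_of_lt (lintegral_mono fun z => ENNReal.ofReal_le_ofReal ?_)
    hgauss.lintegral_lt_top
  rw [← Real.exp_add]
  gcongr
  nlinarith [hquad z]

theorem gaussian_comp_integral_finite_iff_affine (α p : ℝ) (hα : 0 < α) (hp : 0 < p)
    (ψ : ℂ → ℂ) (hψ : Differentiable ℂ ψ) :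
    (∫⁻ z : ℂ, ENNReal.ofReal
        (Real.exp ((p * α / 2) * (‖ψ z‖ ^ 2 - ‖z‖ ^ 2)))) < ⊤
      ↔ ∃ a b : ℂ, ‖a‖ < 1 ∧ ∀ z : ℂ, ψ z = a * z + b := by
  have hc : 0 < p * α / 2 := by positivity
  constructor
  · intro hfin
    obtain ⟨C, hC⟩ := exists_norm_le_norm_add_const_of_lintegral_lt_top hψ hc hfin
    obtain ⟨a, b, ha, hab⟩ := exists_eq_mul_add_of_norm_deriv_le hψ
      (norm_deriv_le_of_norm_le_mul_norm_add_const hψ zero_le_one (by simpa using hC))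
    refine ⟨a, b, ha.lt_of_ne fun ha1 => ?_, hab⟩
    simp only [hab] at hfin
    exact hfin.ne (lintegral_exp_sq_norm_mul_add_sub_eq_top ha1 b _)
  · rintro ⟨a, b, ha, hab⟩
    simpa only [hab] using lintegral_exp_sq_norm_mul_add_sub_lt_top ha b hc
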